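/- Let g be a Lie algebra over a field k and let r : g → n_n(k) be a wide homomorphism. Then for every pair of indices 1 ≤ i < j ≤ n there exists u ∈ g^{(j−i)} with λ_{i,j}(u) ≠ 0; that is, every canonical matrix entry of r is surjective. -/

import Mathlib

/-!
Write `λ_{i,j}` for the matrix entries of `r`. Brackets raise the order of vanishing along
superdiagonals, so `r` maps `g^{(s+1)}` into matrices vanishing on and below the `s`-th
superdiagonal. For `j = i + s + 2` and `w ∈ g^{(s+1)}` this collapses the bracket formula to
`λ_{i,j}⁅v, w⁆ = λ_{i,i+1}(v) λ_{i+1,j}(w) - λ_{i,j-1}(w) λ_{j-1,j}(v)`.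
By induction on `j - i` choose `w` with `λ_{i+1,j}(w) ≠ 0`; then, as a functional of `v`, the
right-hand side is a nontrivial combination of the independent `λ_{i,i+1}` and `λ_{j-1,j}`,
so it is nonzero for some `v`. Mathlib indexes the lower central series from `0`, so
`g^{(s+1)}` is `lowerCentralSeries k g g s`.
-/

attribute [local instance 100] LieRing.ofAssociativeRing

namespace Matrix

variable (R : Type*) (n : ℕ)

/-- `aboveSuperdiag R n 0` is `n_n(R)`. -/
def aboveSuperdiag [Semiring R] (m : ℕ) : Submodule R (Matrix (Fin n) (Fin n) R) where
  carrier := {A | ∀ i j : Fin n, (j : ℕ) ≤ i + m → A i j = 0}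
  add_mem' hA hB i j hij := by simp [hA i j hij, hB i j hij]
  zero_mem' _ _ _ := rfl
  smul_mem' c A hA i j hij := by simp [hA i j hij]

variable {R n}

theorem mul_mem_aboveSuperdiag [Semiring R] {a b : ℕ} {A B : Matrix (Fin n) (Fin n) R}
    (hA : A ∈ aboveSuperdiag R n a) (hB : B ∈ aboveSuperdiag R n b) :
    A * B ∈ aboveSuperdiag R n (a + b + 1) := by
  intro i j hij
  rw [mul_apply]
  refine Finset.sum_eq_zero fun l _ => ?_
  by_cases hl : (l : ℕ) ≤ i + a
  · rw [hA i l hl, zero_mul]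
  · rw [hB l j (by omega), mul_zero]

theorem lie_mem_aboveSuperdiag [Ring R] {a b : ℕ} {A B : Matrix (Fin n) (Fin n) R}
    (hA : A ∈ aboveSuperdiag R n a) (hB : B ∈ aboveSuperdiag R n b) :
    ⁅A, B⁆ ∈ aboveSuperdiag R n (a + b + 1) := by
  rw [Ring.lie_def]
  refine sub_mem (mul_mem_aboveSuperdiag hA hB) ?_
  rw [add_comm a]
  exact mul_mem_aboveSuperdiag hB hA

theorem lie_apply_of_mem_aboveSuperdiag [Ring R] {s : ℕ} {A B : Matrix (Fin n) (Fin n) R}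
    (hA : A ∈ aboveSuperdiag R n 0) (hB : B ∈ aboveSuperdiag R n s) {i i' j' j : Fin n}
    (hi' : (i' : ℕ) = i + 1) (hj' : (j : ℕ) = j' + 1) (hij : (j : ℕ) = i + s + 2) :
    ⁅A, B⁆ i j = A i i' * B i' j - B i j' * A j' j := by
  rw [Ring.lie_def, sub_apply, mul_apply, mul_apply,
    Finset.sum_eq_single i' ?first (by simp), Finset.sum_eq_single j' ?second (by simp)]
  case first =>
    intro l _ hl
    by_cases hli : (l : ℕ) ≤ i + 0
    · rw [hA i l hli, zero_mul]
    · rw [hB l j (by omega), mul_zero]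
  case second =>
    intro l _ hl
    by_cases hli : (l : ℕ) ≤ i + s
    · rw [hB i l hli, zero_mul]
    · rw [hA l j (by omega), mul_zero]

end Matrix

open Matrix

section LowerCentralSeries

variable {k : Type*} [CommRing k] {g : Type*} [LieRing g] [LieAlgebra k g] {n : ℕ}

theorem apply_mem_aboveSuperdiag_of_mem_lowerCentralSeries
    (r : g →ₗ⁅k⁆ Matrix (Fin n) (Fin n) k) (hr : ∀ v, r v ∈ aboveSuperdiag k n 0) :
    ∀ (m : ℕ), ∀ u ∈ LieModule.lowerCentralSeries k g g m, r u ∈ aboveSuperdiag k n m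
  | 0, u, _ => hr u
  | m + 1, u, hu => by
    rw [LieModule.lowerCentralSeries_succ, ← LieSubmodule.mem_toSubmodule,
      LieSubmodule.lieIdeal_oper_eq_linear_span'] at hu
    refine Submodule.span_le (p := (aboveSuperdiag k n (m + 1)).comap r.toLinearMap).mpr ?_ hu
    rintro _ ⟨v, -, w, hw, rfl⟩
    rw [SetLike.mem_coe, Submodule.mem_comap, LieHom.coe_toLinearMap, LieHom.map_lie]
    simpa only [zero_add] using
      lie_mem_aboveSuperdiag (hr v) (apply_mem_aboveSuperdiag_of_mem_lowerCentralSeries r hr m w hw)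

theorem exists_mem_lowerCentralSeries_apply_ne_zero (r : g →ₗ⁅k⁆ Matrix (Fin n) (Fin n) k)
    (hr : ∀ v, r v ∈ aboveSuperdiag k n 0)
    (hflag : ∀ (i : ℕ) (hi : i + 1 < n),
      ∃ v : g, r v ⟨i, Nat.lt_of_succ_lt hi⟩ ⟨i + 1, hi⟩ ≠ 0)
    (hwide : ∀ (i j : ℕ) (hi : i + 1 < n) (hj : j + 1 < n), i ≠ j →
      ∀ a b : k,
        (∀ v : g,
          a * r v ⟨i, Nat.lt_of_succ_lt hi⟩ ⟨i + 1, hi⟩ +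
            b * r v ⟨j, Nat.lt_of_succ_lt hj⟩ ⟨j + 1, hj⟩ = 0) →
        a = 0 ∧ b = 0) :
    ∀ (s i j : ℕ) (hij : j = i + s + 1) (hj : j < n),
      ∃ u ∈ LieModule.lowerCentralSeries k g g s, r u ⟨i, by omega⟩ ⟨j, hj⟩ ≠ 0
  | 0, i, _, rfl, hj => by
    obtain ⟨v, hv⟩ := hflag i hj
    exact ⟨v, LieSubmodule.mem_top v, hv⟩
  | s + 1, i, _, rfl, hj => by
    obtain ⟨w, hw, hwne⟩ := exists_mem_lowerCentralSeries_apply_ne_zero r hr hflag hwide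
      s (i + 1) (i + (s + 1) + 1) (by omega) hj
    have hvw : ∃ v : g,
        r v ⟨i, by omega⟩ ⟨i + 1, by omega⟩ * r w ⟨i + 1, by omega⟩ ⟨_, hj⟩ -
          r w ⟨i, by omega⟩ ⟨i + s + 1, by omega⟩ * r v ⟨i + s + 1, by omega⟩ ⟨i + s + 1 + 1, hj⟩
        ≠ 0 := by
      by_contra! h
      refine hwne (hwide i (i + s + 1) (by omega) hj (by omega) _
        (-r w ⟨i, by omega⟩ ⟨i + s + 1, by omega⟩) fun v => ?_).1
      rw [← h v]
      ring
    obtain ⟨v, hv⟩ := hvw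
    refine ⟨⁅v, w⁆, ?_, ?_⟩
    · rw [LieModule.lowerCentralSeries_succ]
      exact LieSubmodule.lie_mem_lie (LieSubmodule.mem_top v) hw
    · rwa [LieHom.map_lie, lie_apply_of_mem_aboveSuperdiag (hr v)
        (apply_mem_aboveSuperdiag_of_mem_lowerCentralSeries r hr s w hw)
        (i' := ⟨i + 1, by omega⟩) (j' := ⟨i + s + 1, by omega⟩) rfl rfl rfl]

end LowerCentralSeries

/-- Let `r : g → n_n(k)` be a wide homomorphism (flag, with the successor
entry functionals `λ_{i,i+1}` pairwise linearly independent).  Then for every pair `i < j`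
there exists `u ∈ g^{(j-i)}` with `λ_{i,j}(u) ≠ 0`; i.e. every canonical matrix entry of `r`
is surjective.  (Note Mathlib's `lowerCentralSeries ⋯ 0 = g = g^{(1)}`, so `g^{(s)}` is
`lowerCentralSeries ⋯ (s-1)`.) -/
theorem stmt_8 {k : Type*} [Field k] {g : Type*} [LieRing g] [LieAlgebra k g] {n : ℕ}
    (r : g →ₗ⁅k⁆ Matrix (Fin n) (Fin n) k)
    (hr : ∀ (v : g) (i j : Fin n), j ≤ i → r v i j = 0)
    (hflag : ∀ (i : ℕ) (hi : i + 1 < n), ∃ v : g, r v ⟨i, by omega⟩ ⟨i + 1, hi⟩ ≠ 0)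
    (hwide : ∀ (i j : ℕ) (hi : i + 1 < n) (hj : j + 1 < n), i ≠ j →
      ∀ a b : k,
        (∀ v : g,
          a * r v ⟨i, by omega⟩ ⟨i + 1, hi⟩ + b * r v ⟨j, by omega⟩ ⟨j + 1, hj⟩ = 0) →
        a = 0 ∧ b = 0) :
    ∀ i j : Fin n, i < j →
      ∃ u ∈ LieModule.lowerCentralSeries k g g ((j : ℕ) - (i : ℕ) - 1), r u i j ≠ 0 := by
  intro i j hij
  exact exists_mem_lowerCentralSeries_apply_ne_zero r
    (fun v i j hji => hr v i j (by simpa using hji)) hflag hwide _ i j (by omega) j.isLt
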